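/- arXiv:1108.5464 — 2 statements merged into one kernel-verified Lean document; each statement's English description precedes it below -/
import Mathlib

section
/- Let Z_1, Z_2 be independent random variables, each with regularly varying tail of index -α (α > 0). Then the product |Z_1 Z_2| has regularly varying tail of index -α, i.e., there exists a slowly varying function L_1 such that P(|Z_1 Z_2| > x) = x^{-α} L_1(x). -/
/-!
Write `F̄_X(u) = P(X > u)`. It suffices to show `limsup F̄_{XY}(tρ) / F̄_{XY}(t) ≤ ρ^{-α}` for every
`ρ > 0`: applied to `ρ⁻¹` at time `tρ` this also gives the matching `liminf`.

Put `s = √t` and split `{XY > tρ}` according to `Y ≤ s`, `X ≤ s`, or `X, Y > s`. Slicing `Y ≤ s`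
into blocks `Y ∈ (r^k, r^{k+1}]` and using independence, the regular variation of `F̄_X` at
arguments `≥ sρ/r → ∞` bounds each slice by `≈ ρ^{-α}` times the matching slice of `{XY > t}`;
symmetrically for `X ≤ s`, and the two resulting pieces of `{XY > t}` are disjoint. The corner
`F̄_X(s) F̄_Y(s)` is negligible, because `{XY > t}` contains the `m` disjoint blocks
`{X ∈ (s 2^j, s 2^{j+1}], Y > s 2^{-j}}`, each of probability `≈ (1 - 2^{-α}) F̄_X(s) F̄_Y(s)`.
-/

open MeasureTheory ProbabilityTheory Filter Real Set Topology
open scoped ENNReal Function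

/-- As `x / 0 = 0`, this forces `f t ≠ 0` for all large `t`. -/
def IsRegularlyVarying (f : ℝ → ℝ) (β : ℝ) : Prop :=
  ∀ ρ : ℝ, 0 < ρ → Tendsto (fun t => f (t * ρ) / f t) atTop (𝓝 (ρ ^ β))

namespace IsRegularlyVarying

variable {f g : ℝ → ℝ} {β : ℝ}

theorem congr_of_pos (hf : IsRegularlyVarying f β) (hfg : ∀ x, 0 < x → f x = g x) :
    IsRegularlyVarying g β := fun ρ hρ => by
  refine (hf ρ hρ).congr' ?_
  filter_upwards [eventually_gt_atTop 0] with t ht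
  rw [hfg t ht, hfg (t * ρ) (mul_pos ht hρ)]

theorem rpow_mul (hf : IsRegularlyVarying f β) (γ : ℝ) :
    IsRegularlyVarying (fun x => x ^ γ * f x) (γ + β) := fun ρ hρ => by
  rw [Real.rpow_add hρ]
  refine ((hf ρ hρ).const_mul (ρ ^ γ)).congr' ?_
  filter_upwards [eventually_gt_atTop 0] with t ht
  rw [mul_div_mul_comm, Real.mul_rpow ht.le hρ.le,
    mul_div_cancel_left₀ _ (Real.rpow_pos_of_pos ht γ).ne']

theorem pos_of_antitone (hf : IsRegularlyVarying f β) (hmono : Antitone f)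
    (hnonneg : ∀ x, 0 ≤ f x) (x : ℝ) : 0 < f x := by
  have hlim : ∀ᶠ t in atTop, 0 < f (t * 1) / f t :=
    (hf 1 one_pos).eventually_const_lt (by rw [Real.one_rpow]; exact one_pos)
  obtain ⟨t, hxt, ht⟩ := ((eventually_ge_atTop x).and hlim).exists
  have hft : f t ≠ 0 := fun h => by simp [h] at ht
  exact ((hnonneg t).lt_of_ne' hft).trans_le (hmono hxt)

theorem eventually_mul_lt (hf : IsRegularlyVarying f β) (hpos : ∀ᶠ t in atTop, 0 < f t)
    {ρ b : ℝ} (hρ : 0 < ρ) (hb : b < ρ ^ β) : ∀ᶠ t in atTop, b * f t < f (t * ρ) := by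
  filter_upwards [(hf ρ hρ).eventually_const_lt hb, hpos] with t ht hft
  exact (lt_div_iff₀ hft).1 ht

theorem tendsto_sub_mul_div_mul (hf : IsRegularlyVarying f β) (hg : IsRegularlyVarying g β)
    {a l : ℝ} (ha : 0 < a) (hl : 0 < l) :
    Tendsto (fun s => (f (s * a) - f (s * (a * l))) * g (s * a⁻¹) / (f s * g s)) atTop
      (𝓝 (1 - l ^ β)) := by
  have hlim := ((hf a ha).sub (hf (a * l) (mul_pos ha hl))).mul (hg a⁻¹ (inv_pos.2 ha))
  have hval : (a ^ β - (a * l) ^ β) * a⁻¹ ^ β = 1 - l ^ β := by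
    rw [Real.mul_rpow ha.le hl.le, Real.inv_rpow ha.le]
    field_simp [(Real.rpow_pos_of_pos ha β).ne']
  rw [hval] at hlim
  refine hlim.congr fun s => ?_
  rw [← sub_div, mul_div_mul_comm]

end IsRegularlyVarying

theorem isRegularlyVarying_of_eq_rpow_mul {f L : ℝ → ℝ} {β : ℝ} (hL : IsRegularlyVarying L 0)
    (hf : ∀ x, 0 < x → f x = x ^ β * L x) : IsRegularlyVarying f β := by
  rw [← add_zero β]
  exact (hL.rpow_mul β).congr_of_pos fun x hx => (hf x hx).symm

theorem isRegularlyVarying_of_eventually_le {f : ℝ → ℝ} {β : ℝ}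
    (hpos : ∀ᶠ t in atTop, 0 < f t)
    (hle : ∀ ρ : ℝ, 0 < ρ → ∀ b, ρ ^ β < b → ∀ᶠ t in atTop, f (t * ρ) ≤ b * f t) :
    IsRegularlyVarying f β := by
  intro ρ hρ
  have hρβ : 0 < ρ ^ β := Real.rpow_pos_of_pos hρ β
  rw [tendsto_order]
  constructor
  · intro b hb
    obtain ⟨b', hbb', hb'⟩ := exists_between (max_lt hb hρβ)
    have hb'0 : 0 < b' := (le_max_right _ _).trans_lt hbb'
    have hinv : ρ⁻¹ ^ β < b'⁻¹ := by
      rw [Real.inv_rpow hρ.le]; exact inv_strictAnti₀ hb'0 hb'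
    filter_upwards [(tendsto_id.atTop_mul_const hρ).eventually (hle ρ⁻¹ (inv_pos.2 hρ) _ hinv),
      hpos] with t ht hft
    rw [id, mul_inv_cancel_right₀ hρ.ne'] at ht
    rw [lt_div_iff₀ hft]
    calc b * f t < b' * f t := mul_lt_mul_of_pos_right ((le_max_left _ _).trans_lt hbb') hft
      _ ≤ b' * (b'⁻¹ * f (t * ρ)) := by gcongr
      _ = f (t * ρ) := by field_simp
  · intro b hb
    obtain ⟨b', hb', hbb'⟩ := exists_between hb
    filter_upwards [hle ρ hρ b' hb', hpos] with t ht hft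
    rw [div_lt_iff₀ hft]
    exact ht.trans_lt (mul_lt_mul_of_pos_right hbb' hft)

section TailOfProduct

variable {Ω : Type*} [MeasurableSpace Ω] {μ : Measure Ω} {X Y : Ω → ℝ}

def tailProb (μ : Measure Ω) (X : Ω → ℝ) (u : ℝ) : ℝ := μ.real {ω | u < X ω}

theorem tailProb_antitone [IsFiniteMeasure μ] : Antitone (tailProb μ X) :=
  fun _ _ hab => measureReal_mono fun _ hω => hab.trans_lt hω

theorem IsRegularlyVarying.tailProb_pos [IsFiniteMeasure μ] {β : ℝ}
    (h : IsRegularlyVarying (tailProb μ X) β) (u : ℝ) : 0 < tailProb μ X u :=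
  h.pos_of_antitone tailProb_antitone (fun _ => measureReal_nonneg) u

theorem measure_le_ofReal_mul_iff [IsFiniteMeasure μ] {A B : Set Ω} {c : ℝ} (hc : 0 ≤ c) :
    μ A ≤ ENNReal.ofReal c * μ B ↔ μ.real A ≤ c * μ.real B := by
  rw [← ofReal_measureReal (s := A), ← ofReal_measureReal (s := B), ← ENNReal.ofReal_mul hc,
    ENNReal.ofReal_le_ofReal_iff (mul_nonneg hc measureReal_nonneg)]

theorem ProbabilityTheory.IndepFun.measureReal_inter_preimage_eq_mul (hXY : IndepFun X Y μ)
    {A B : Set ℝ} (hA : MeasurableSet A) (hB : MeasurableSet B) :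
    μ.real (X ⁻¹' A ∩ Y ⁻¹' B) = μ.real (X ⁻¹' A) * μ.real (Y ⁻¹' B) := by
  simp only [measureReal_def, hXY.measure_inter_preimage_eq_mul A B hA hB, ENNReal.toReal_mul]

theorem tailProb_mul_pos [IsFiniteMeasure μ] (hXY : IndepFun X Y μ) {t : ℝ} (ht : 0 < t)
    (hfX : 0 < tailProb μ X t) (hfY : 0 < tailProb μ Y 1) :
    0 < tailProb μ (fun ω => X ω * Y ω) t := by
  refine (mul_pos hfX hfY).trans_le <| (hXY.measureReal_inter_preimage_eq_mul
    measurableSet_Ioi measurableSet_Ioi).symm.trans_le <| measureReal_mono fun ω ⟨hXω, hYω⟩ => ?_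
  simpa using mul_lt_mul'' hXω hYω ht.le zero_le_one

theorem measure_lt_mul_le_of_measure_lt_le (hX : Measurable X) (hY : Measurable Y)
    (hXY : IndepFun X Y μ) (hX0 : ∀ ω, 0 ≤ X ω) {a B r κ u₀ : ℝ} {c : ℝ≥0∞}
    (ha : 0 < a) (hr : 1 < r) (hκ : 0 < κ) (hu₀ : u₀ ≤ a / (B * r))
    (htail : ∀ u, u₀ ≤ u → μ {ω | u < X ω} ≤ c * μ {ω | u * κ < X ω}) :
    μ {ω | a < X ω * Y ω ∧ Y ω ≤ B} ≤ c * μ {ω | a * κ / r < X ω * Y ω ∧ Y ω ≤ B} := by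
  have hr0 : 0 < r := one_pos.trans hr
  set I : ℤ → Set ℝ := fun k => Ioc (r ^ k) (r ^ (k + 1)) ∩ Iic B
  have hI : ∀ k, MeasurableSet (I k) := fun k => measurableSet_Ioc.inter measurableSet_Iic
  set U : ℤ → Set Ω := fun k => X ⁻¹' Ioi (a / r ^ (k + 1)) ∩ Y ⁻¹' I k
  set V : ℤ → Set Ω := fun k => X ⁻¹' Ioi (a * κ / r ^ (k + 1)) ∩ Y ⁻¹' I k
  have hsub : {ω | a < X ω * Y ω ∧ Y ω ≤ B} ⊆ ⋃ k, U k := by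
    rintro ω ⟨hlt, hB⟩
    have hY0 : 0 < Y ω := pos_of_mul_pos_right (ha.trans hlt) (hX0 ω)
    obtain ⟨k, hk⟩ := exists_mem_Ioc_zpow hY0 hr
    refine mem_iUnion.2 ⟨k, ?_, hk, hB⟩
    rw [mem_preimage, mem_Ioi, div_lt_iff₀ (zpow_pos hr0 _)]
    exact hlt.trans_le (mul_le_mul_of_nonneg_left hk.2 (hX0 ω))
  have hUV : ∀ k, μ (U k) ≤ c * μ (V k) := by
    intro k
    by_cases hk : r ^ k < B
    · have hthr : u₀ ≤ a / r ^ (k + 1) := hu₀.trans <| by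
        rw [zpow_add_one₀ hr0.ne']
        gcongr
      have hκ' : a / r ^ (k + 1) * κ = a * κ / r ^ (k + 1) := by ring
      rw [hXY.measure_inter_preimage_eq_mul _ _ measurableSet_Ioi (hI k),
        hXY.measure_inter_preimage_eq_mul _ _ measurableSet_Ioi (hI k), ← mul_assoc]
      gcongr
      rw [← hκ']
      exact htail _ hthr
    · have hIk : I k = ∅ := eq_empty_of_forall_notMem fun y ⟨⟨hy, _⟩, hyB⟩ =>
        hk (hy.trans_le hyB)
      simp [U, hIk]
  have hVsub : ∀ k, V k ⊆ {ω | a * κ / r < X ω * Y ω ∧ Y ω ≤ B} := by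
    rintro k ω ⟨hXω, ⟨hYk, -⟩, hYB⟩
    refine ⟨?_, hYB⟩
    have hpos : 0 < a * κ / r ^ (k + 1) := by positivity
    calc a * κ / r = a * κ / r ^ (k + 1) * r ^ k := by
          rw [zpow_add_one₀ hr0.ne']; field_simp
      _ < X ω * Y ω := mul_lt_mul'' hXω hYk hpos.le (zpow_pos hr0 k).le
  have hVdisj : Pairwise (Disjoint on V) := fun k l hkl =>
    ((Monotone.pairwise_disjoint_on_Ioc_succ (zpow_right_mono₀ hr.le) hkl).preimage Y).mono
      (fun ω hω => by simpa [Order.succ_eq_add_one] using hω.2.1)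
      (fun ω hω => by simpa [Order.succ_eq_add_one] using hω.2.1)
  calc μ {ω | a < X ω * Y ω ∧ Y ω ≤ B} ≤ ∑' k, μ (U k) :=
        (measure_mono hsub).trans (measure_iUnion_le _)
    _ ≤ ∑' k, c * μ (V k) := ENNReal.tsum_le_tsum hUV
    _ = c * μ (⋃ k, V k) := by
        rw [ENNReal.tsum_mul_left,
          measure_iUnion hVdisj fun k => (hX measurableSet_Ioi).inter (hY (hI k))]
    _ ≤ c * μ {ω | a * κ / r < X ω * Y ω ∧ Y ω ≤ B} := by
        gcongr; exact iUnion_subset hVsub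

theorem sum_tailProb_sub_mul_le [IsFiniteMeasure μ] (hX : Measurable X) (hY : Measurable Y)
    (hXY : IndepFun X Y μ) {s l : ℝ} (hs : 0 < s) (hl : 1 ≤ l) (m : ℕ) :
    ∑ j ∈ Finset.range m, (tailProb μ X (s * l ^ j) - tailProb μ X (s * (l ^ j * l))) *
        tailProb μ Y (s * (l ^ j)⁻¹) ≤ tailProb μ (fun ω => X ω * Y ω) (s * s) := by
  set A : ℕ → Set Ω := fun j => X ⁻¹' Ioc (s * l ^ j) (s * l ^ (j + 1)) ∩ Y ⁻¹' Ioi (s * (l ^ j)⁻¹)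
  have hmono : Monotone fun j : ℕ => s * l ^ j := fun i j hij =>
    mul_le_mul_of_nonneg_left (pow_le_pow_right₀ hl hij) hs.le
  have hA : ∀ j, μ.real (A j) = (tailProb μ X (s * l ^ j) - tailProb μ X (s * (l ^ j * l))) *
      tailProb μ Y (s * (l ^ j)⁻¹) := fun j => by
    rw [hXY.measureReal_inter_preimage_eq_mul measurableSet_Ioc measurableSet_Ioi,
      ← Ioi_sdiff_Ioi, preimage_sdiff, measureReal_sdiff
        (preimage_mono (Ioi_subset_Ioi (hmono j.le_succ))) (hX measurableSet_Ioi)]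
    simp only [Nat.succ_eq_add_one, pow_succ]
    rfl
  have hdisj : PairwiseDisjoint (Finset.range m : Set ℕ) A := fun i _ j _ hij =>
    ((hmono.pairwise_disjoint_on_Ioc_succ hij).preimage X).mono inter_subset_left
      inter_subset_left
  have hsub : ⋃ j ∈ Finset.range m, A j ⊆ {ω | s * s < X ω * Y ω} :=
    iUnion₂_subset fun j _ ω ⟨hXω, hYω⟩ => by
      have hlj : 0 < l ^ j := pow_pos (zero_lt_one.trans_le hl) j
      calc s * s = s * l ^ j * (s * (l ^ j)⁻¹) := by field_simp
        _ < X ω * Y ω := mul_lt_mul'' hXω.1 hYω (by positivity) (by positivity)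
  calc _ = ∑ j ∈ Finset.range m, μ.real (A j) := Finset.sum_congr rfl fun j _ => (hA j).symm
    _ = μ.real (⋃ j ∈ Finset.range m, A j) := (measureReal_biUnion_finset hdisj
        fun j _ => (hX measurableSet_Ioc).inter (hY measurableSet_Ioi)).symm
    _ ≤ _ := measureReal_mono hsub

theorem measure_lt_mul_le_add (a s : ℝ) :
    μ {ω | a < X ω * Y ω} ≤ μ {ω | a < X ω * Y ω ∧ Y ω ≤ s} +
      μ {ω | a < Y ω * X ω ∧ X ω ≤ s} + μ {ω | s < X ω ∧ s < Y ω} := by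
  refine (measure_mono fun ω hω => ?_).trans
    ((measure_union_le _ _).trans (add_le_add_left (measure_union_le _ _) _))
  by_cases hY : Y ω ≤ s
  · exact Or.inl (Or.inl ⟨hω, hY⟩)
  by_cases hX : X ω ≤ s
  · exact Or.inl (Or.inr ⟨by rwa [mul_comm], hX⟩)
  exact Or.inr ⟨not_le.1 hX, not_le.1 hY⟩

theorem measure_sq_lt_mul_and_le_add_le (hX : Measurable X) (hY : Measurable Y)
    (hX0 : ∀ ω, 0 ≤ X ω) (hY0 : ∀ ω, 0 ≤ Y ω) (s : ℝ) :
    μ {ω | s * s < X ω * Y ω ∧ Y ω ≤ s} + μ {ω | s * s < Y ω * X ω ∧ X ω ≤ s} ≤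
      μ {ω | s * s < X ω * Y ω} := by
  have hdisj : Disjoint {ω | s * s < X ω * Y ω ∧ Y ω ≤ s} {ω | s * s < Y ω * X ω ∧ X ω ≤ s} :=
    disjoint_left.2 fun ω ⟨hlt, hYs⟩ ⟨_, hXs⟩ =>
      hlt.not_ge (mul_le_mul hXs hYs (hY0 ω) ((hX0 ω).trans hXs))
  rw [← measure_union hdisj ((measurableSet_lt measurable_const (hY.mul hX)).inter
    (measurableSet_le hX measurable_const))]
  exact measure_mono <| union_subset (fun ω h => h.1) fun ω ⟨h, _⟩ =>
    show s * s < X ω * Y ω by rwa [mul_comm (X ω)]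

theorem IsRegularlyVarying.eventually_measure_lt_le [IsFiniteMeasure μ] {β κ c : ℝ}
    (hf : IsRegularlyVarying (tailProb μ X) β) (hκ : 0 < κ) (hc : 0 < c) (hcκ : c⁻¹ < κ ^ β) :
    ∀ᶠ u in atTop, μ {ω | u < X ω} ≤ ENNReal.ofReal c * μ {ω | u * κ < X ω} := by
  filter_upwards [hf.eventually_mul_lt (.of_forall hf.tailProb_pos) hκ hcκ] with u hu
  rw [measure_le_ofReal_mul_iff hc.le]
  calc tailProb μ X u = c * (c⁻¹ * tailProb μ X u) := by field_simp
    _ ≤ c * tailProb μ X (u * κ) := by gcongr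

variable {α : ℝ}

theorem eventually_tailProb_mul_tailProb_le [IsFiniteMeasure μ] (hX : Measurable X)
    (hY : Measurable Y) (hXY : IndepFun X Y μ) (hα : 0 < α)
    (hfX : IsRegularlyVarying (tailProb μ X) (-α)) (hfY : IsRegularlyVarying (tailProb μ Y) (-α))
    {ε : ℝ} (hε : 0 < ε) :
    ∀ᶠ s in atTop,
      tailProb μ X s * tailProb μ Y s ≤ ε * tailProb μ (fun ω => X ω * Y ω) (s * s) := by
  set q : ℝ := 1 - 2 ^ (-α)
  have hq : 0 < q := sub_pos.2 (Real.rpow_lt_one_of_one_lt_of_neg one_lt_two (neg_lt_zero.2 hα))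
  obtain ⟨m, hm⟩ := exists_nat_gt (2 / (ε * q))
  have hmq : 1 ≤ ε * (q / 2) * m := by
    rw [div_lt_iff₀ (mul_pos hε hq)] at hm
    linarith
  have hblocks : ∀ᶠ s in atTop, ∀ j ∈ Finset.range m, q / 2 <
      (tailProb μ X (s * 2 ^ j) - tailProb μ X (s * (2 ^ j * 2))) * tailProb μ Y (s * (2 ^ j)⁻¹) /
        (tailProb μ X s * tailProb μ Y s) :=
    (eventually_all_finset _).2 fun j _ =>
      (hfX.tendsto_sub_mul_div_mul hfY (pow_pos two_pos j) two_pos).eventually_const_lt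
        (half_lt_self hq)
  filter_upwards [hblocks, eventually_gt_atTop 0] with s hs hs0
  have hP : 0 < tailProb μ X s * tailProb μ Y s := mul_pos (hfX.tailProb_pos s) (hfY.tailProb_pos s)
  calc tailProb μ X s * tailProb μ Y s
      ≤ ε * ∑ _j ∈ Finset.range m, q / 2 * (tailProb μ X s * tailProb μ Y s) := by
        rw [Finset.sum_const, Finset.card_range, nsmul_eq_mul]
        nlinarith
    _ ≤ ε * ∑ j ∈ Finset.range m, (tailProb μ X (s * 2 ^ j) - tailProb μ X (s * (2 ^ j * 2))) *
        tailProb μ Y (s * (2 ^ j)⁻¹) := by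
        gcongr ε * ?_
        exact Finset.sum_le_sum fun j hj => ((lt_div_iff₀ hP).1 (hs j hj)).le
    _ ≤ ε * tailProb μ (fun ω => X ω * Y ω) (s * s) := by
        gcongr
        exact sum_tailProb_sub_mul_le hX hY hXY hs0 one_le_two m

theorem exists_one_lt_div_rpow_lt {ρ c : ℝ} (hρ : 0 < ρ) (hc : ρ ^ (-α) < c) :
    ∃ r, 1 < r ∧ (r / ρ) ^ α < c := by
  have hcont : Tendsto (fun r => (r / ρ) ^ α) (𝓝[>] 1) (𝓝 (ρ ^ (-α))) := by
    have := ((tendsto_nhdsWithin_of_tendsto_nhds (s := Ioi 1) tendsto_id).div_const ρ).rpow_const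
      (p := α) (Or.inl (one_div_pos.2 hρ).ne')
    rwa [one_div, Real.inv_rpow hρ.le, ← Real.rpow_neg hρ.le] at this
  obtain ⟨r, hrc, hr⟩ := ((hcont.eventually (gt_mem_nhds hc)).and self_mem_nhdsWithin).exists
  exact ⟨r, hr, hrc⟩

theorem eventually_tailProb_mul_le [IsFiniteMeasure μ] (hX : Measurable X) (hY : Measurable Y)
    (hX0 : ∀ ω, 0 ≤ X ω) (hY0 : ∀ ω, 0 ≤ Y ω) (hXY : IndepFun X Y μ) (hα : 0 < α)
    (hfX : IsRegularlyVarying (tailProb μ X) (-α)) (hfY : IsRegularlyVarying (tailProb μ Y) (-α))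
    {ρ b : ℝ} (hρ : 0 < ρ) (hb : ρ ^ (-α) < b) :
    ∀ᶠ s in atTop, tailProb μ (fun ω => X ω * Y ω) (s * s * ρ) ≤
      b * tailProb μ (fun ω => X ω * Y ω) (s * s) := by
  set δ := (b - ρ ^ (-α)) / 2
  have hδ : 0 < δ := by simp only [δ]; linarith
  set c := ρ ^ (-α) + δ
  have hc : 0 < c := by positivity
  obtain ⟨r, hr, hrc⟩ := exists_one_lt_div_rpow_lt hρ (lt_add_of_pos_right _ hδ)
  have hr0 : 0 < r := one_pos.trans hr
  set κ := r / ρ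
  have hκ : 0 < κ := div_pos hr0 hρ
  have hcκ : c⁻¹ < κ ^ (-α) := by
    rw [Real.rpow_neg hκ.le]
    exact inv_strictAnti₀ (Real.rpow_pos_of_pos hκ α) hrc
  obtain ⟨u₀, hu₀⟩ := eventually_atTop.1 ((hfX.eventually_measure_lt_le hκ hc hcκ).and
    (hfY.eventually_measure_lt_le hκ hc hcκ))
  filter_upwards [eventually_tailProb_mul_tailProb_le hX hY hXY hα hfX hfY hδ,
    (tendsto_id.atTop_mul_const (div_pos hρ hr0)).eventually_ge_atTop u₀,
    eventually_gt_atTop 0] with s hdiag hsu hs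
  have hthr : u₀ ≤ s * s * ρ / (s * r) := hsu.trans_eq (by simp only [id]; field_simp)
  have hsκ : s * s * ρ * κ / r = s * s := by simp only [κ]; field_simp
  have hXblock := measure_lt_mul_le_of_measure_lt_le hX hY hXY hX0 (by positivity) hr hκ hthr
    fun u hu => (hu₀ u hu).1
  have hYblock := measure_lt_mul_le_of_measure_lt_le hY hX hXY.symm hY0 (by positivity) hr hκ
    hthr fun u hu => (hu₀ u hu).2
  rw [hsκ] at hXblock hYblock
  have hboth : μ {ω | s < X ω ∧ s < Y ω} ≤
      ENNReal.ofReal δ * μ {ω | s * s < X ω * Y ω} := by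
    rw [measure_le_ofReal_mul_iff hδ.le]
    exact (hXY.measureReal_inter_preimage_eq_mul measurableSet_Ioi measurableSet_Ioi).trans_le
      hdiag
  refine (measure_le_ofReal_mul_iff ((Real.rpow_pos_of_pos hρ _).trans hb).le).1 ?_
  calc μ {ω | s * s * ρ < X ω * Y ω}
      ≤ μ {ω | s * s * ρ < X ω * Y ω ∧ Y ω ≤ s} + μ {ω | s * s * ρ < Y ω * X ω ∧ X ω ≤ s} +
          μ {ω | s < X ω ∧ s < Y ω} := measure_lt_mul_le_add _ s
    _ ≤ ENNReal.ofReal c * (μ {ω | s * s < X ω * Y ω ∧ Y ω ≤ s} +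
          μ {ω | s * s < Y ω * X ω ∧ X ω ≤ s}) + ENNReal.ofReal δ * μ {ω | s * s < X ω * Y ω} := by
        rw [mul_add]
        gcongr
    _ ≤ ENNReal.ofReal c * μ {ω | s * s < X ω * Y ω} +
          ENNReal.ofReal δ * μ {ω | s * s < X ω * Y ω} := by
        gcongr
        exact measure_sq_lt_mul_and_le_add_le hX hY hX0 hY0 s
    _ = ENNReal.ofReal b * μ {ω | s * s < X ω * Y ω} := by
        rw [← add_mul, ← ENNReal.ofReal_add hc.le hδ.le]
        congr 3
        simp only [c, δ]
        ring

theorem isRegularlyVarying_tailProb_mul [IsFiniteMeasure μ] (hX : Measurable X)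
    (hY : Measurable Y) (hX0 : ∀ ω, 0 ≤ X ω) (hY0 : ∀ ω, 0 ≤ Y ω) (hXY : IndepFun X Y μ)
    (hα : 0 < α) (hfX : IsRegularlyVarying (tailProb μ X) (-α))
    (hfY : IsRegularlyVarying (tailProb μ Y) (-α)) :
    IsRegularlyVarying (tailProb μ fun ω => X ω * Y ω) (-α) := by
  refine isRegularlyVarying_of_eventually_le ?_ fun ρ hρ b hb => ?_
  · filter_upwards [eventually_gt_atTop 0] with t ht
    exact tailProb_mul_pos hXY ht (hfX.tailProb_pos t) (hfY.tailProb_pos 1)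
  · filter_upwards [tendsto_sqrt_atTop.eventually
      (eventually_tailProb_mul_le hX hY hX0 hY0 hXY hα hfX hfY hρ hb),
      eventually_ge_atTop 0] with t ht ht0
    rwa [Real.mul_self_sqrt ht0] at ht

end TailOfProduct

theorem stmt4_general {Ω : Type*} [MeasurableSpace Ω] (μ : Measure Ω) [IsProbabilityMeasure μ]
    (Z₁ Z₂ : Ω → ℝ) (hZ₁ : Measurable Z₁) (hZ₂ : Measurable Z₂)
    (hindep : IndepFun Z₁ Z₂ μ)
    (α : ℝ) (hα : 0 < α)
    (L₁ L₂ : ℝ → ℝ)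
    (hL₁slow : ∀ x : ℝ, 0 < x → Tendsto (fun t => L₁ (t * x) / L₁ t) atTop (nhds 1))
    (hL₂slow : ∀ x : ℝ, 0 < x → Tendsto (fun t => L₂ (t * x) / L₂ t) atTop (nhds 1))
    (htail₁ : ∀ x : ℝ, 0 < x → (μ {ω | x < |Z₁ ω|}).toReal = x ^ (-α) * L₁ x)
    (htail₂ : ∀ x : ℝ, 0 < x → (μ {ω | x < |Z₂ ω|}).toReal = x ^ (-α) * L₂ x) :
    ∃ L₃ : ℝ → ℝ, (∀ x : ℝ, 0 < x → 0 < L₃ x) ∧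
      (∀ x : ℝ, 0 < x → Tendsto (fun t => L₃ (t * x) / L₃ t) atTop (nhds 1)) ∧
      (∀ x : ℝ, 0 < x → (μ {ω | x < |Z₁ ω * Z₂ ω|}).toReal = x ^ (-α) * L₃ x) := by
  have hL₁ : IsRegularlyVarying L₁ 0 := fun x hx => by simpa using hL₁slow x hx
  have hL₂ : IsRegularlyVarying L₂ 0 := fun x hx => by simpa using hL₂slow x hx
  have hprod := isRegularlyVarying_tailProb_mul hZ₁.abs hZ₂.abs (fun ω => abs_nonneg _)
    (fun ω => abs_nonneg _) (hindep.comp measurable_abs measurable_abs) hα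
    (isRegularlyVarying_of_eq_rpow_mul hL₁ htail₁) (isRegularlyVarying_of_eq_rpow_mul hL₂ htail₂)
  simp only [← abs_mul] at hprod
  refine ⟨fun x => x ^ α * tailProb μ (fun ω => |Z₁ ω * Z₂ ω|) x,
    fun x hx => mul_pos (Real.rpow_pos_of_pos hx α) (hprod.tailProb_pos x),
    fun x hx => by simpa using hprod.rpow_mul α x hx, fun x hx => ?_⟩
  rw [← mul_assoc, ← Real.rpow_add hx, neg_add_cancel, Real.rpow_zero, one_mul]
  rfl

/-- (Embrechts–Goldie) The product of two independent random variables,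
each with regularly varying tail of index `-α`, has regularly varying tail of index `-α`:
there is a slowly varying `L₁` with `P(|Z₁ Z₂| > x) = x^{-α} L₁(x)` for `x > 0`. -/
theorem stmt4 {Ω : Type*} [MeasurableSpace Ω] (μ : Measure Ω) [IsProbabilityMeasure μ]
    (Z₁ Z₂ : Ω → ℝ) (hZ₁ : Measurable Z₁) (hZ₂ : Measurable Z₂)
    (hindep : IndepFun Z₁ Z₂ μ)
    (α : ℝ) (hα : 0 < α)
    (L₁ L₂ : ℝ → ℝ)
    (hL₁pos : ∀ x : ℝ, 0 < x → 0 < L₁ x) (hL₂pos : ∀ x : ℝ, 0 < x → 0 < L₂ x)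
    (hL₁slow : ∀ x : ℝ, 0 < x → Tendsto (fun t => L₁ (t * x) / L₁ t) atTop (nhds 1))
    (hL₂slow : ∀ x : ℝ, 0 < x → Tendsto (fun t => L₂ (t * x) / L₂ t) atTop (nhds 1))
    (htail₁ : ∀ x : ℝ, 0 < x → (μ {ω | x < |Z₁ ω|}).toReal = x ^ (-α) * L₁ x)
    (htail₂ : ∀ x : ℝ, 0 < x → (μ {ω | x < |Z₂ ω|}).toReal = x ^ (-α) * L₂ x) :
    ∃ L₃ : ℝ → ℝ, (∀ x : ℝ, 0 < x → 0 < L₃ x) ∧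
      (∀ x : ℝ, 0 < x → Tendsto (fun t => L₃ (t * x) / L₃ t) atTop (nhds 1)) ∧
      (∀ x : ℝ, 0 < x → (μ {ω | x < |Z₁ ω * Z₂ ω|}).toReal = x ^ (-α) * L₃ x) :=
  stmt4_general μ Z₁ Z₂ hZ₁ hZ₂ hindep α hα L₁ L₂ hL₁slow hL₂slow htail₁ htail₂
end

section
/- Let X be a p×n random matrix whose entries are identically distributed with regularly varying tails of index α ∈ (0,1) and normalizing sequence a_n, with independent rows. If limsup p_n / n^β < ∞ for some β < ∞ and p_n → ∞, then a_{np}^{-2} ‖X X^T − diag(X X^T)‖_2 → 0 in probability. -/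
open MeasureTheory ProbabilityTheory Filter Real Matrix

noncomputable section

/-- The operator 2-norm (spectral norm) of a real matrix, viewed as a linear map
between Euclidean spaces. -/
def l2OpNorm {m n : ℕ} (A : Matrix (Fin m) (Fin n) ℝ) : ℝ :=
  ‖LinearMap.toContinuousLinearMap (Matrix.toEuclideanLin A)‖

/-!
Truncate the entries at `M = δ a_m`, `m = np`. Off the event that some entry exceeds `M`, whose
probability is at most `m P(|X₁₁| > δ a_m) → δ^{-α}`, the spectral norm is bounded by the
entrywise `ℓ¹` norm of the off-diagonal Gram matrix of the truncated entries, whose mean is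
`p(p-1) n (E min(|X₁₁|, M))²` by row independence. Because `α < 1` the truncated mean is
`O(a_m / m)`: a layer-cake sum over the levels `a_{2^r}`, which grow geometrically faster than
`2^r`, is dominated by its top term. Markov's inequality then bounds the remaining probability
by `O(1/n)`, and `δ` is arbitrary.
-/

open Finset Topology

lemma EuclideanSpace.norm_le_sum_abs {ι : Type*} [Fintype ι] (x : EuclideanSpace ℝ ι) :
    ‖x‖ ≤ ∑ i, |x i| := by
  rw [EuclideanSpace.norm_eq, sqrt_le_left (sum_nonneg fun i _ => abs_nonneg _)]
  simpa using sum_sq_le_sq_sum_of_nonneg (s := univ) (f := fun i => |x i|) fun i _ => abs_nonneg _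

lemma l2OpNorm_le_sum_abs {m n : ℕ} (A : Matrix (Fin m) (Fin n) ℝ) :
    l2OpNorm A ≤ ∑ i, ∑ j, |A i j| := by
  refine ContinuousLinearMap.opNorm_le_bound _ (by positivity) fun x => ?_
  refine (EuclideanSpace.norm_le_sum_abs _).trans ?_
  rw [sum_mul]
  refine sum_le_sum fun i _ => ?_
  calc |∑ j, A i j * x j| ≤ ∑ j, |A i j| * |x j| := by
        simpa only [abs_mul] using abs_sum_le_sum_abs (fun j => A i j * x j) univ
    _ ≤ ∑ j, |A i j| * ‖x‖ := by
        gcongr with j; exact PiLp.norm_apply_le x j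
    _ = (∑ j, |A i j|) * ‖x‖ := (sum_mul ..).symm

def offDiagGram (x : ℕ → ℕ → ℝ) (p n : ℕ) : Matrix (Fin p) (Fin p) ℝ :=
  Matrix.of fun i j => if i = j then 0 else ∑ t ∈ range n, x i t * x j t

lemma abs_offDiagGram_le {x y : ℕ → ℕ → ℝ} {p n : ℕ} (h : ∀ i < p, ∀ t < n, |x i t| ≤ y i t)
    (i j : Fin p) : |offDiagGram x p n i j| ≤ offDiagGram y p n i j := by
  simp only [offDiagGram, of_apply]
  split_ifs
  · simp
  · refine (abs_sum_le_sum_abs _ _).trans (sum_le_sum fun t ht => ?_)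
    have ht := mem_range.1 ht
    rw [abs_mul]
    exact mul_le_mul (h i i.2 t ht) (h j j.2 t ht) (abs_nonneg _)
      ((abs_nonneg _).trans (h i i.2 t ht))

lemma l2OpNorm_offDiagGram_le {x y : ℕ → ℕ → ℝ} {p n : ℕ}
    (h : ∀ i < p, ∀ t < n, |x i t| ≤ y i t) :
    l2OpNorm (offDiagGram x p n) ≤ ∑ i, ∑ j, offDiagGram y p n i j :=
  (l2OpNorm_le_sum_abs _).trans <| sum_le_sum fun i _ => sum_le_sum fun j _ =>
    abs_offDiagGram_le h i j

lemma offDiagGram_nonneg {x : ℕ → ℕ → ℝ} (hx : ∀ i t, 0 ≤ x i t) (p n : ℕ) (i j : Fin p) :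
    0 ≤ offDiagGram x p n i j := by
  simp only [offDiagGram, of_apply]
  split_ifs
  · rfl
  · exact sum_nonneg fun t _ => mul_nonneg (hx _ _) (hx _ _)

lemma min_le_add_sum_ite {b : ℕ → ℝ} (hb : Monotone b) (hb0 : 0 ≤ b 0) (v : ℝ) (K : ℕ) :
    min v (b K) ≤ b 0 + ∑ r ∈ range K, if b r < v then b (r + 1) else 0 := by
  induction K with
  | zero => simp
  | succ K ih =>
    rw [sum_range_succ]
    by_cases hv : b K < v
    · have hsum : 0 ≤ ∑ r ∈ range K, if b r < v then b (r + 1) else 0 :=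
        sum_nonneg fun r _ => by split_ifs <;> linarith [hb (Nat.zero_le (r + 1))]
      rw [if_pos hv]
      linarith [min_le_right v (b (K + 1))]
    · rw [if_neg hv, add_zero, min_eq_left ((not_lt.1 hv).trans (hb K.le_succ))]
      rwa [min_eq_left (not_lt.1 hv)] at ih

-- `2cy/(y-2)` is the fixed point of `A ↦ 2A/y + 2c`, the recursion met in the inductive step.
lemma sum_mul_le_of_two_lt {b f : ℕ → ℝ} {y c : ℝ} (hy : 2 < y) (hc : 0 ≤ c) (hb0 : 0 ≤ b 0)
    (hby : ∀ r, y * b r ≤ b (r + 1)) (hf : ∀ r, f r ≤ c / 2 ^ r) (K : ℕ) :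
    ∑ r ∈ range K, b (r + 1) * f r ≤ 2 * c * y / (y - 2) * (b K / 2 ^ K) := by
  set A := 2 * c * y / (y - 2)
  have hy2 : 0 < y - 2 := by linarith
  have hA : 0 ≤ A := by positivity
  have hb : ∀ r, 0 ≤ b r := fun r =>
    (mul_nonneg (pow_nonneg (by linarith) r) hb0).trans (geom_le (by linarith) r fun k _ => hby k)
  induction K with
  | zero => simpa using mul_nonneg hA hb0
  | succ K ih =>
    have hAy : A / y * 2 + 2 * c = A := by
      simp only [A]; field_simp; ring
    have h1 : A * (b K / 2 ^ K) ≤ A / y * 2 * (b (K + 1) / 2 ^ (K + 1)) := by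
      rw [pow_succ]
      have hyK := hby K
      have hy0 : 0 < y := by linarith
      calc A * (b K / 2 ^ K) = A / y * ((y * b K) / 2 ^ K) := by field_simp
        _ ≤ A / y * (b (K + 1) / 2 ^ K) := by gcongr
        _ = _ := by field_simp
    have h2 : b (K + 1) * f K ≤ 2 * c * (b (K + 1) / 2 ^ (K + 1)) := by
      calc b (K + 1) * f K ≤ b (K + 1) * (c / 2 ^ K) := mul_le_mul_of_nonneg_left (hf K) (hb _)
        _ = _ := by rw [pow_succ]; field_simp
    rw [sum_range_succ, ← hAy, add_mul]
    linarith

lemma exists_two_lt_one_lt_two_mul_rpow {α : ℝ} (hα : α < 1) :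
    ∃ y : ℝ, 2 < y ∧ 1 < 2 * y ^ (-α) := by
  have hcont : ContinuousAt (fun y : ℝ => 2 * y ^ (-α)) 2 :=
    continuousAt_const.mul (continuousAt_rpow_const _ _ (Or.inl two_ne_zero))
  have h2 : 1 < 2 * (2 : ℝ) ^ (-α) := by
    rw [← rpow_one_add' zero_le_two (by linarith)]
    exact one_lt_rpow one_lt_two (by linarith)
  obtain ⟨y, hy, hy2⟩ := ((hcont.eventually (lt_mem_nhds h2)).filter_mono
    (nhdsWithin_le_nhds (s := Set.Ioi 2)) |>.and self_mem_nhdsWithin).exists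
  exact ⟨y, hy2, hy⟩

lemma exists_two_pow_between (s : ℕ) {m : ℕ} (hm : m ≠ 0) :
    ∃ K, Nat.log 2 m ≤ K ∧ 2 ^ s * m ≤ 2 ^ K ∧ 2 ^ K ≤ 2 ^ (s + 1) * m := by
  refine ⟨s + (Nat.log 2 m + 1), by omega, ?_, ?_⟩
  · rw [pow_add]
    exact Nat.mul_le_mul_left _ (Nat.lt_pow_succ_log_self one_lt_two m).le
  · rw [show s + (Nat.log 2 m + 1) = (s + 1) + Nat.log 2 m by omega, pow_add]
    exact Nat.mul_le_mul_left _ (Nat.pow_log_le_self 2 hm)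

section Probability

variable {Ω : Type*} [MeasurableSpace Ω] {μ : Measure Ω}

lemma measureReal_lt_le_integral_div [IsFiniteMeasure μ] {f : Ω → ℝ} (hf0 : ∀ ω, 0 ≤ f ω)
    (hf : Integrable f μ) {τ : ℝ} (hτ : 0 < τ) : μ.real {ω | τ < f ω} ≤ (∫ ω, f ω ∂μ) / τ := by
  rw [le_div_iff₀' hτ]
  have hsub : {ω | τ < f ω} ⊆ {ω | τ ≤ f ω} := Set.ofPred_subset_ofPred.2 fun _ => le_of_lt
  exact (mul_le_mul_of_nonneg_left (measureReal_mono hsub) hτ.le).trans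
    (mul_meas_ge_le_integral_of_nonneg (.of_forall hf0) hf τ)

lemma integrable_min_const [IsFiniteMeasure μ] {Y : Ω → ℝ} (hY : Measurable Y)
    (hY0 : ∀ ω, 0 ≤ Y ω) (M : ℝ) :
    Integrable (fun ω => min (Y ω) M) μ :=
  (integrable_const |M|).mono' (hY.min measurable_const).aestronglyMeasurable <|
    .of_forall fun ω => abs_le.2
      ⟨le_min (by linarith [abs_nonneg M, hY0 ω]) (neg_abs_le M),
        (min_le_right _ _).trans (le_abs_self M)⟩

lemma antitone_measureReal_lt [IsFiniteMeasure μ] (Y : Ω → ℝ) :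
    Antitone fun u => μ.real {ω | u < Y ω} :=
  fun _ _ huv => measureReal_mono fun _ hω => huv.trans_lt hω

lemma integral_min_le_add_sum [IsProbabilityMeasure μ] {Y : Ω → ℝ} (hY : Measurable Y)
    (hY0 : ∀ ω, 0 ≤ Y ω) {b : ℕ → ℝ} (hb : Monotone b) (hb0 : 0 ≤ b 0) (K : ℕ) :
    ∫ ω, min (Y ω) (b K) ∂μ ≤ b 0 + ∑ r ∈ range K, b (r + 1) * μ.real {ω | b r < Y ω} := by
  have hS : ∀ r, MeasurableSet {ω | b r < Y ω} := fun r => measurableSet_lt measurable_const hY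
  have hind : ∀ r, Integrable ({ω | b r < Y ω}.indicator fun _ => b (r + 1)) μ := fun r =>
    (integrable_const _).indicator (hS r)
  calc ∫ ω, min (Y ω) (b K) ∂μ
      ≤ ∫ ω, (b 0 + ∑ r ∈ range K, {ω | b r < Y ω}.indicator (fun _ => b (r + 1)) ω) ∂μ := by
        refine integral_mono (integrable_min_const hY hY0 _)
          ((integrable_const _).add (integrable_finsetSum _ fun r _ => hind r)) fun ω => ?_
        simpa [Set.indicator_apply] using min_le_add_sum_ite hb hb0 (Y ω) K
    _ = b 0 + ∑ r ∈ range K, b (r + 1) * μ.real {ω | b r < Y ω} := by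
        rw [integral_add (integrable_const _) (integrable_finsetSum _ fun r _ => hind r),
          integral_finsetSum _ fun r _ => hind r]
        simp [integral_indicator_const _ (hS _), mul_comm]

lemma ProbabilityTheory.iIndepFun.integrable_mul_apply {Z : ℕ → Ω → ℕ → ℝ} (hZ : iIndepFun Z μ)
    (hint : ∀ i t, Integrable (fun ω => Z i ω t) μ) {i j : ℕ} (hij : i ≠ j) (t : ℕ) :
    Integrable (fun ω => Z i ω t * Z j ω t) μ :=
  ((hZ.indepFun hij).comp (measurable_pi_apply t) (measurable_pi_apply t)).integrable_mul
    (hint i t) (hint j t)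

lemma integrable_offDiagGram_apply {Z : ℕ → Ω → ℕ → ℝ} (hZ : iIndepFun Z μ)
    (hint : ∀ i t, Integrable (fun ω => Z i ω t) μ) (p n : ℕ) (i j : Fin p) :
    Integrable (fun ω => offDiagGram (fun i t => Z i ω t) p n i j) μ := by
  simp only [offDiagGram, of_apply]
  split_ifs with hij
  · exact integrable_zero _ _ _
  · exact integrable_finsetSum _ fun t _ =>
      hZ.integrable_mul_apply hint (Fin.val_injective.ne hij) t

lemma integral_offDiagGram_apply [IsProbabilityMeasure μ] {Z : ℕ → Ω → ℕ → ℝ}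
    (hZ : iIndepFun Z μ) (hint : ∀ i t, Integrable (fun ω => Z i ω t) μ) {e : ℝ}
    (he : ∀ i t, ∫ ω, Z i ω t ∂μ = e) (p n : ℕ) (i j : Fin p) :
    ∫ ω, offDiagGram (fun i t => Z i ω t) p n i j ∂μ = if i = j then 0 else n * e ^ 2 := by
  simp only [offDiagGram, of_apply]
  split_ifs with hij
  · simp
  · have hij' : (i : ℕ) ≠ j := Fin.val_injective.ne hij
    rw [integral_finsetSum _ fun t _ => hZ.integrable_mul_apply hint hij' t]
    have hmul : ∀ t, ∫ ω, Z i ω t * Z j ω t ∂μ = e ^ 2 := fun t => by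
      calc ∫ ω, Z i ω t * Z j ω t ∂μ = (∫ ω, Z i ω t ∂μ) * ∫ ω, Z j ω t ∂μ :=
            ((hZ.indepFun hij').comp (measurable_pi_apply t) (measurable_pi_apply t))
              |>.integral_mul_eq_mul_integral (hint i t).aestronglyMeasurable
                (hint j t).aestronglyMeasurable
        _ = e ^ 2 := by rw [he, he, sq]
    simp [hmul]

lemma integral_sum_offDiagGram_le [IsProbabilityMeasure μ] {Z : ℕ → Ω → ℕ → ℝ}
    (hZ : iIndepFun Z μ) (hint : ∀ i t, Integrable (fun ω => Z i ω t) μ) {e : ℝ}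
    (he : ∀ i t, ∫ ω, Z i ω t ∂μ = e) (p n : ℕ) :
    ∫ ω, ∑ i, ∑ j, offDiagGram (fun i t => Z i ω t) p n i j ∂μ ≤ p ^ 2 * n * e ^ 2 := by
  have hG := integrable_offDiagGram_apply hZ hint p n
  rw [integral_finsetSum _ fun i _ => integrable_finsetSum _ fun j _ => hG i j]
  simp_rw [integral_finsetSum _ fun j _ => hG _ j, integral_offDiagGram_apply hZ hint he]
  calc ∑ i : Fin p, ∑ j : Fin p, (if i = j then 0 else (n : ℝ) * e ^ 2)
      ≤ ∑ _i : Fin p, ∑ _j : Fin p, (n : ℝ) * e ^ 2 :=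
        sum_le_sum fun i _ => sum_le_sum fun j _ => by split_ifs <;> [positivity; exact le_rfl]
    _ = p ^ 2 * n * e ^ 2 := by simp; ring

lemma measureReal_exists_lt_abs_le [IsProbabilityMeasure μ] {X : ℕ → Ω → ℕ → ℝ}
    (hident : ∀ i t, IdentDistrib (fun ω => X i ω t) (fun ω => X 0 ω 0) μ μ) (p n : ℕ) (M : ℝ) :
    μ.real {ω | ∃ i < p, ∃ t < n, M < |X i ω t|} ≤ (n * p : ℕ) * μ.real {ω | M < |X 0 ω 0|} := by
  have hset : {ω | ∃ i < p, ∃ t < n, M < |X i ω t|} =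
      ⋃ i ∈ range p, ⋃ t ∈ range n, {ω | M < |X i ω t|} := by
    ext; simp
  have heq : ∀ i t, μ.real {ω | M < |X i ω t|} = μ.real {ω | M < |X 0 ω 0|} := fun i t =>
    congrArg ENNReal.toReal
      ((hident i t).measure_mem_eq (measurableSet_lt measurable_const measurable_abs))
  rw [hset]
  refine (measureReal_biUnion_finset_le _ _).trans <|
    (sum_le_sum fun i _ => measureReal_biUnion_finset_le _ _).trans_eq ?_
  simp only [heq, sum_const, card_range, nsmul_eq_mul]
  push_cast; ring

theorem measureReal_lt_l2OpNorm_offDiagGram_le [IsProbabilityMeasure μ] {X : ℕ → Ω → ℕ → ℝ}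
    (hmeas : ∀ i, Measurable (X i)) (hindep : iIndepFun X μ)
    (hident : ∀ i t, IdentDistrib (fun ω => X i ω t) (fun ω => X 0 ω 0) μ μ)
    (p n : ℕ) {M τ : ℝ} (hM : 0 ≤ M) (hτ : 0 < τ) :
    μ.real {ω | τ < l2OpNorm (offDiagGram (fun i t => X i ω t) p n)} ≤
      (n * p : ℕ) * μ.real {ω | M < |X 0 ω 0|} +
        p ^ 2 * n * (∫ ω, min |X 0 ω 0| M ∂μ) ^ 2 / τ := by
  set Z : ℕ → Ω → ℕ → ℝ := fun i ω t => min |X i ω t| M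
  set T : Ω → ℝ := fun ω => ∑ i, ∑ j, offDiagGram (fun i t => Z i ω t) p n i j
  have hZ : iIndepFun Z μ := hindep.comp _ fun i =>
    measurable_pi_lambda _ fun t => (measurable_pi_apply t).abs.min measurable_const
  have hZint : ∀ i t, Integrable (fun ω => Z i ω t) μ := fun i t =>
    integrable_min_const ((measurable_pi_apply t).comp (hmeas i)).abs (fun _ => abs_nonneg _) M
  have hZe : ∀ i t, ∫ ω, Z i ω t ∂μ = ∫ ω, min |X 0 ω 0| M ∂μ := fun i t =>
    ((hident i t).comp (measurable_abs.min measurable_const)).integral_eq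
  have hT0 : ∀ ω, 0 ≤ T ω := fun ω => sum_nonneg fun i _ => sum_nonneg fun j _ =>
    offDiagGram_nonneg (fun i t => le_min (abs_nonneg _) hM) p n i j
  have hTint : Integrable T μ := integrable_finsetSum _ fun i _ => integrable_finsetSum _ fun j _ =>
    integrable_offDiagGram_apply hZ hZint p n i j
  have hincl : {ω | τ < l2OpNorm (offDiagGram (fun i t => X i ω t) p n)} ⊆
      {ω | ∃ i < p, ∃ t < n, M < |X i ω t|} ∪ {ω | τ < T ω} := by
    intro ω hω
    rw [Set.mem_union, or_iff_not_imp_left]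
    intro hgood
    simp only [Set.mem_ofPred_eq, not_exists, not_and, not_lt] at hgood
    exact hω.trans_le (l2OpNorm_offDiagGram_le fun i hi t ht => le_min le_rfl (hgood i hi t ht))
  calc _ ≤ μ.real {ω | ∃ i < p, ∃ t < n, M < |X i ω t|} + μ.real {ω | τ < T ω} :=
        (measureReal_mono hincl).trans (measureReal_union_le _ _)
    _ ≤ _ := add_le_add (measureReal_exists_lt_abs_le hident p n M) <|
        (measureReal_lt_le_integral_div hT0 hTint hτ).trans <|
          div_le_div_of_nonneg_right (integral_sum_offDiagGram_le hZ hZint hZe p n) hτ.le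

end Probability

def IsRegVarTail (F : ℝ → ℝ) (a : ℕ → ℝ) (α : ℝ) : Prop :=
  ∀ x : ℝ, 0 < x → Tendsto (fun n : ℕ => (n : ℝ) * F (a n * x)) atTop (𝓝 (x ^ (-α)))

namespace IsRegVarTail

variable {F : ℝ → ℝ} {a : ℕ → ℝ} {α : ℝ}

lemma tendsto_natCast_mul (h : IsRegVarTail F a α) :
    Tendsto (fun n : ℕ => (n : ℝ) * F (a n)) atTop (𝓝 1) := by
  simpa using h 1 one_pos

-- The tails at `a l * z` and `a k * x` are about `z^(-α)/l` and `x^(-α)/k`; for `l ≥ c k` the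
-- former is smaller, so, `F` being antitone, its argument is larger.
lemma exists_forall_mul_lt_mul (h : IsRegVarTail F a α) (hF : Antitone F) {x z c : ℝ}
    (hx : 0 < x) (hz : 0 < z) (hc : 0 < c) (hxz : z ^ (-α) < c * x ^ (-α)) :
    ∃ N, ∀ k l : ℕ, N ≤ k → N ≤ l → c * k ≤ l → a k * x < a l * z := by
  obtain ⟨d₁, hzd₁, hd₁⟩ := exists_between hxz
  obtain ⟨d₂, hd₁₂, hd₂⟩ := exists_between ((div_lt_iff₀' hc).2 hd₁)
  have hd₁0 : 0 < d₁ := (rpow_pos_of_pos hz _).trans hzd₁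
  obtain ⟨N, hN⟩ := eventually_atTop.1 <|
    ((h z hz).eventually_lt_const hzd₁).and <|
      ((h x hx).eventually_const_lt hd₂).and (eventually_gt_atTop 0)
  refine ⟨N, fun k l hk hl hkl => hF.reflect_lt ?_⟩
  obtain ⟨-, hk₂, hk₀⟩ := hN k hk
  obtain ⟨hl₁, -, hl₀⟩ := hN l hl
  have hk₀ : (0 : ℝ) < k := by exact_mod_cast hk₀
  have hl₀ : (0 : ℝ) < l := by exact_mod_cast hl₀
  calc F (a l * z) < d₁ / l := by rw [lt_div_iff₀' hl₀]; exact hl₁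
    _ ≤ d₁ / (c * k) := div_le_div_of_nonneg_left hd₁0.le (by positivity) hkl
    _ = d₁ / c / k := by rw [div_div]
    _ < d₂ / k := div_lt_div_of_pos_right hd₁₂ hk₀
    _ < F (a k * x) := by rw [div_lt_iff₀' hk₀]; exact hk₂

lemma eventually_pos (h : IsRegVarTail F a α) (hF : Antitone F) (hα : 0 < α) :
    ∀ᶠ n in atTop, 0 < a n := by
  have h2 : (2 : ℝ) ^ (-α) < 1 * 1 ^ (-α) := by
    rw [one_rpow, one_mul]; exact rpow_lt_one_of_one_lt_of_neg one_lt_two (by linarith)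
  obtain ⟨N, hN⟩ := h.exists_forall_mul_lt_mul hF one_pos two_pos one_pos h2
  filter_upwards [eventually_ge_atTop N] with n hn
  linarith [hN n n hn hn (by simp)]

lemma eventually_tail_le (h : IsRegVarTail F a α) : ∀ᶠ n : ℕ in atTop, F (a n) ≤ 2 / n := by
  filter_upwards [h.tendsto_natCast_mul.eventually_le_const one_lt_two, eventually_gt_atTop 0]
    with n hn hn₀
  rwa [le_div_iff₀' (by exact_mod_cast hn₀)]

lemma exists_dyadic_growth (h : IsRegVarTail F a α) (hF : Antitone F) (hα : α ∈ Set.Ioo 0 1) :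
    ∃ y > 2, ∃ r₀ : ℕ, ∀ r ≥ r₀,
      0 < a (2 ^ r) ∧ y * a (2 ^ r) ≤ a (2 ^ (r + 1)) ∧ F (a (2 ^ r)) ≤ 2 / 2 ^ r := by
  obtain ⟨y, hy, hy'⟩ := exists_two_lt_one_lt_two_mul_rpow hα.2
  obtain ⟨N₁, hN₁⟩ := h.exists_forall_mul_lt_mul (x := y) hF (by linarith) one_pos two_pos
    (by rwa [one_rpow])
  obtain ⟨N₂, hN₂⟩ := eventually_atTop.1 ((h.eventually_pos hF hα.1).and h.eventually_tail_le)
  refine ⟨y, hy, max N₁ N₂, fun r hr => ?_⟩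
  have hN : ∀ r' ≥ r, max N₁ N₂ ≤ 2 ^ r' := fun r' hr' =>
    hr.trans (hr'.trans Nat.lt_two_pow_self.le)
  obtain ⟨hpos, htail⟩ := hN₂ _ ((le_max_right _ _).trans (hN r le_rfl))
  have hdouble := hN₁ (2 ^ r) (2 ^ (r + 1)) ((le_max_left _ _).trans (hN r le_rfl))
    ((le_max_left _ _).trans (hN _ r.le_succ)) (by push_cast; rw [pow_succ]; linarith)
  refine ⟨hpos, by linarith, by exact_mod_cast htail⟩

variable {Ω : Type*} [MeasurableSpace Ω] {μ : Measure Ω} [IsProbabilityMeasure μ] {Y : Ω → ℝ}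

lemma exists_integral_min_dyadic_le (hY : Measurable Y) (hY0 : ∀ ω, 0 ≤ Y ω)
    (hα : α ∈ Set.Ioo 0 1) (h : IsRegVarTail (fun u => μ.real {ω | u < Y ω}) a α) :
    ∃ C, 0 ≤ C ∧ ∀ᶠ K in atTop, ∫ ω, min (Y ω) (a (2 ^ K)) ∂μ ≤ C * (a (2 ^ K) / 2 ^ K) := by
  obtain ⟨y, hy, r₀, hr₀⟩ := h.exists_dyadic_growth (antitone_measureReal_lt Y) hα
  set b : ℕ → ℝ := fun r => a (2 ^ (r₀ + r))
  have hb : ∀ r, 0 < b r := fun r => (hr₀ _ (Nat.le_add_right _ _)).1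
  have hby : ∀ r, y * b r ≤ b (r + 1) := fun r => (hr₀ _ (Nat.le_add_right _ _)).2.1
  have hbF : ∀ r, μ.real {ω | b r < Y ω} ≤ 2 / 2 ^ r₀ / 2 ^ r := fun r => by
    rw [div_div, ← pow_add]; exact (hr₀ _ (Nat.le_add_right _ _)).2.2
  have hmono : Monotone b := monotone_nat_of_le_succ fun r =>
    (le_mul_of_one_le_left (hb r).le (by linarith)).trans (hby r)
  have hgrowth : ∀ᶠ k in atTop, b 0 ≤ b k / 2 ^ (r₀ + k) := by
    filter_upwards [(tendsto_pow_atTop_atTop_of_one_lt (r := y / 2) (by linarith))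
      |>.eventually_ge_atTop (2 ^ r₀)] with k hk
    rw [le_div_iff₀ (by positivity), pow_add]
    calc b 0 * (2 ^ r₀ * 2 ^ k) ≤ b 0 * ((y / 2) ^ k * 2 ^ k) := by gcongr; exact (hb 0).le
      _ = y ^ k * b 0 := by rw [div_pow]; field_simp
      _ ≤ b k := geom_le (by linarith) k fun r _ => hby r
  obtain ⟨k₀, hk₀⟩ := eventually_atTop.1 hgrowth
  have hy2 : 0 < y - 2 := by linarith
  refine ⟨1 + 4 * y / (y - 2), by positivity, ?_⟩
  filter_upwards [eventually_ge_atTop (r₀ + k₀)] with K hK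
  obtain ⟨k, rfl⟩ := Nat.exists_eq_add_of_le (le_of_add_le_left hK)
  have hsum := sum_mul_le_of_two_lt hy (by positivity) (hb 0).le hby hbF k
  have hA : 2 * (2 / 2 ^ r₀) * y / (y - 2) * (b k / 2 ^ k) =
      4 * y / (y - 2) * (b k / 2 ^ (r₀ + k)) := by
    rw [pow_add]; field_simp; ring
  calc ∫ ω, min (Y ω) (b k) ∂μ ≤ b 0 + ∑ r ∈ range k, b (r + 1) * μ.real {ω | b r < Y ω} :=
        integral_min_le_add_sum hY hY0 hmono (hb 0).le k
    _ ≤ b k / 2 ^ (r₀ + k) + 4 * y / (y - 2) * (b k / 2 ^ (r₀ + k)) := by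
        rw [← hA]; exact add_le_add (hk₀ k (by omega)) hsum
    _ = _ := by ring

lemma exists_integral_min_le (hY : Measurable Y) (hY0 : ∀ ω, 0 ≤ Y ω)
    (hα : α ∈ Set.Ioo 0 1) (h : IsRegVarTail (fun u => μ.real {ω | u < Y ω}) a α)
    {δ : ℝ} (hδ : 0 < δ) :
    ∃ C, ∀ᶠ m : ℕ in atTop, ∫ ω, min (Y ω) (a m * δ) ∂μ ≤ C * (a m / m) := by
  have hF := antitone_measureReal_lt (μ := μ) Y
  obtain ⟨C, hC, hCK⟩ := h.exists_integral_min_dyadic_le hY hY0 hα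
  obtain ⟨K₀, hK₀⟩ := eventually_atTop.1 hCK
  obtain ⟨s, hs⟩ : ∃ s : ℕ, δ ^ α < 2 ^ s := pow_unbounded_of_one_lt _ one_lt_two
  obtain ⟨N₁, hN₁⟩ := h.exists_forall_mul_lt_mul (x := δ) (z := 1) (c := 2 ^ s) hF hδ one_pos
    (by positivity) (by rwa [one_rpow, rpow_neg hδ.le, lt_mul_inv_iff₀ (by positivity), one_mul])
  obtain ⟨D, hD', hD⟩ := ((tendsto_rpow_neg_atTop hα.1).eventually_lt_const
    (show (0 : ℝ) < (2 ^ (s + 1))⁻¹ * 1 ^ (-α) by positivity)).and (eventually_gt_atTop 0)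
    |>.exists
  obtain ⟨N₂, hN₂⟩ := h.exists_forall_mul_lt_mul (x := 1) (z := D) hF one_pos hD
    (by positivity) hD'
  obtain ⟨N₃, hN₃⟩ := eventually_atTop.1 (h.eventually_pos hF hα.1)
  refine ⟨C * D, ?_⟩
  filter_upwards [eventually_ge_atTop (max (max N₁ N₂) (max N₃ (2 ^ K₀)))] with m hm
  simp only [max_le_iff] at hm
  obtain ⟨⟨hm₁, hm₂⟩, hm₃, hm₄⟩ := hm
  have hm₀ : 0 < m := (Nat.two_pow_pos K₀).trans_le hm₄
  obtain ⟨K, hlogK, hmK, hKm⟩ := exists_two_pow_between s hm₀.ne'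
  have hmK' : m ≤ 2 ^ K := (Nat.le_mul_of_pos_left m (by positivity)).trans hmK
  have h₁ : a m * δ ≤ a (2 ^ K) := by
    simpa using (hN₁ m (2 ^ K) hm₁ (hm₁.trans hmK') (by exact_mod_cast hmK)).le
  have h₂ : a (2 ^ K) ≤ a m * D := by
    simpa using (hN₂ (2 ^ K) m (hm₂.trans hmK') hm₂
      (by rw [inv_mul_le_iff₀ (by positivity)]; exact_mod_cast hKm)).le
  calc ∫ ω, min (Y ω) (a m * δ) ∂μ ≤ ∫ ω, min (Y ω) (a (2 ^ K)) ∂μ :=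
        integral_mono (integrable_min_const hY hY0 _) (integrable_min_const hY hY0 _)
          fun ω => min_le_min_left _ h₁
    _ ≤ C * (a (2 ^ K) / 2 ^ K) := hK₀ K ((Nat.le_log_of_pow_le one_lt_two hm₄).trans hlogK)
    _ ≤ C * (a m * D / m) := by
        gcongr
        · exact (hN₃ _ (hm₃.trans hmK')).le.trans h₂
        · exact_mod_cast hmK'
    _ = C * D * (a m / m) := by ring

end IsRegVarTail

theorem exists_eventually_measureReal_lt_l2OpNorm_offDiagGram_le {Ω : Type*}
    [MeasurableSpace Ω] {μ : Measure Ω} [IsProbabilityMeasure μ] {X : ℕ → Ω → ℕ → ℝ}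
    (hmeas : ∀ i, Measurable (X i)) (hindep : iIndepFun X μ)
    (hident : ∀ i t, IdentDistrib (fun ω => X i ω t) (fun ω => X 0 ω 0) μ μ)
    {α : ℝ} (hα : α ∈ Set.Ioo 0 1) {a : ℕ → ℝ}
    (hreg : IsRegVarTail (fun u => μ.real {ω | u < |X 0 ω 0|}) a α)
    {p : ℕ → ℕ} (hp : Tendsto p atTop atTop) {ε δ : ℝ} (hε : 0 < ε) (hδ : 0 < δ) :
    ∃ C, ∀ᶠ n in atTop,
      μ.real {ω | a (n * p n) ^ 2 * ε < l2OpNorm (offDiagGram (fun i t => X i ω t) (p n) n)} ≤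
        (n * p n : ℕ) * μ.real {ω | a (n * p n) * δ < |X 0 ω 0|} + C ^ 2 / ε / n := by
  have hm : Tendsto (fun n => n * p n) atTop atTop := tendsto_id.atTop_mul_atTop₀ hp
  obtain ⟨C, hC⟩ := hreg.exists_integral_min_le (Y := fun ω => |X 0 ω 0|)
    ((measurable_pi_apply 0).comp (hmeas 0)).abs (fun _ => abs_nonneg _) hα hδ
  refine ⟨C, ?_⟩
  filter_upwards [hm.eventually hC, hm.eventually (hreg.eventually_pos (antitone_measureReal_lt _)
    hα.1), hp.eventually_gt_atTop 0, eventually_gt_atTop 0] with n hCn hpos hp₀ hn₀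
  set m := n * p n
  set e := ∫ ω, min |X 0 ω 0| (a m * δ) ∂μ
  have he₀ : 0 ≤ e := integral_nonneg fun ω => le_min (abs_nonneg _) (by positivity)
  have htrunc : (p n : ℝ) ^ 2 * n * e ^ 2 / (a m ^ 2 * ε) ≤ C ^ 2 / ε / n := by
    calc _ ≤ (p n : ℝ) ^ 2 * n * (C * (a m / m)) ^ 2 / (a m ^ 2 * ε) := by gcongr
      _ = C ^ 2 / ε / n := by
        have : a m ≠ 0 := hpos.ne'
        rw [show (m : ℝ) = n * p n by simp [m]]
        field_simp
  calc _ ≤ _ := measureReal_lt_l2OpNorm_offDiagGram_le hmeas hindep hident (p n) n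
        (M := a m * δ) (by positivity) (by positivity)
    _ ≤ _ := by gcongr

theorem stmt13_general {Ω : Type*} [MeasurableSpace Ω] (μ : Measure Ω) [IsProbabilityMeasure μ]
    (X : ℕ → Ω → ℕ → ℝ) (hmeas : ∀ i, Measurable (X i))
    (hrows_indep : iIndepFun X μ)
    (hident : ∀ i t, IdentDistrib (fun ω => X i ω t) (fun ω => X 0 ω 0) μ μ)
    (α : ℝ) (hα : α ∈ Set.Ioo (0:ℝ) 1)
    (a : ℕ → ℝ)
    (hb : ∀ x : ℝ, 0 < x →
      Tendsto (fun n : ℕ => (n : ℝ) * (μ {ω | a n * x < |X 0 ω 0|}).toReal)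
        atTop (nhds (x ^ (-α))))
    (p : ℕ → ℕ) (hp : Tendsto p atTop atTop) :
    ∀ ε : ℝ, 0 < ε →
      Tendsto (fun n : ℕ =>
          μ {ω | (a (n * p n)) ^ 2 * ε <
              l2OpNorm (Matrix.of (fun i j : Fin (p n) =>
                if i = j then 0
                else ∑ t ∈ Finset.range n, X i ω t * X j ω t))})
        atTop (nhds 0) := by
  intro ε hε
  have hreg : IsRegVarTail (fun u => μ.real {ω | u < |X 0 ω 0|}) a α := hb
  refine (ENNReal.tendsto_toReal_iff (fun _ => measure_ne_top μ _) ENNReal.zero_ne_top).1 <|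
    tendsto_order.2 ⟨fun c hc => .of_forall fun n => hc.trans_le ENNReal.toReal_nonneg,
      fun η hη => ?_⟩
  obtain ⟨δ, hδη, hδ⟩ := ((tendsto_rpow_neg_atTop hα.1).eventually_lt_const hη).and
    (eventually_gt_atTop 0) |>.exists
  obtain ⟨C, hC⟩ := exists_eventually_measureReal_lt_l2OpNorm_offDiagGram_le hmeas hrows_indep
    hident hα hreg hp hε hδ
  have hlim : Tendsto (fun n : ℕ => ((n * p n : ℕ) : ℝ) *
      μ.real {ω | a (n * p n) * δ < |X 0 ω 0|} + C ^ 2 / ε / n) atTop (𝓝 (δ ^ (-α) + 0)) :=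
    ((hreg δ hδ).comp (tendsto_id.atTop_mul_atTop₀ hp)).add
      (tendsto_const_div_atTop_nhds_zero_nat _)
  filter_upwards [hC, hlim.eventually_lt_const (by rwa [add_zero])] with n hn hlt
  exact hn.trans_lt hlt

/-- Let `X` be a `p×n` random matrix with identically distributed
entries having regularly varying tails of index `α ∈ (0,1)` and normalizing sequence
`a_m = m^{1/α} L(m)`, with independent rows (arbitrary dependence within each row).
If `p_n → ∞` and `p_n ≤ C n^β` eventually for some `β < ∞`, then
`a_{np}^{-2} ‖X Xᵀ − diag(X Xᵀ)‖₂ → 0` in probability. -/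
theorem stmt13 {Ω : Type*} [MeasurableSpace Ω] (μ : Measure Ω) [IsProbabilityMeasure μ]
    (X : ℕ → Ω → ℕ → ℝ) (hmeas : ∀ i, Measurable (X i))
    (hrows_indep : iIndepFun X μ)
    (hident : ∀ i t, IdentDistrib (fun ω => X i ω t) (fun ω => X 0 ω 0) μ μ)
    (α : ℝ) (hα : α ∈ Set.Ioo (0:ℝ) 1)
    (L : ℝ → ℝ) (hLpos : ∀ x : ℝ, 0 < x → 0 < L x)
    (hLslow : ∀ x : ℝ, 0 < x → Tendsto (fun t => L (t * x) / L t) atTop (nhds 1))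
    (a : ℕ → ℝ) (ha : ∀ m : ℕ, a m = (m : ℝ) ^ (α⁻¹) * L m)
    (hb : ∀ x : ℝ, 0 < x →
      Tendsto (fun n : ℕ => (n : ℝ) * (μ {ω | a n * x < |X 0 ω 0|}).toReal)
        atTop (nhds (x ^ (-α))))
    (p : ℕ → ℕ) (hp : Tendsto p atTop atTop)
    (β C : ℝ) (hβ : 0 < β)
    (hgrowth : ∀ᶠ n : ℕ in atTop, (p n : ℝ) ≤ C * (n : ℝ) ^ β) :
    ∀ ε : ℝ, 0 < ε →
      Tendsto (fun n : ℕ =>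
          μ {ω | (a (n * p n)) ^ 2 * ε <
              l2OpNorm (Matrix.of (fun i j : Fin (p n) =>
                if i = j then 0
                else ∑ t ∈ Finset.range n, X i ω t * X j ω t))})
        atTop (nhds 0) :=
  stmt13_general μ X hmeas hrows_indep hident α hα a hb p hp
end
end
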